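/- arXiv:1809.04428 — 4 statements merged into one kernel-verified Lean document; each statement's English description precedes it below -/
import Mathlib

section
/- Let T > 0, let f : [0,T] → ℝ be continuous, let K ≥ 0 and v ∈ ℝ. Then there exists a continuous function V : [0,T] → ℝ such that for every t ∈ [0,T], V(t) = v + K · max( sup_{s ∈ [0,t]} ( −( f(s) + ∫_0^s V(u) du ) ), 0 ). -/
open MeasureTheory Set

/-!
A running supremum is 1-Lipschitz for the sup norm on `[0, t]`, so changing `V` into `W` moves the
right-hand side at time `t` by at most `|K| ∫₀ᵗ |V - W|`. Iterating such a Volterra-type estimate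
`n` times gives the Lipschitz constant `(|K| T)ⁿ / n!` on `C([0, T])`; for large `n` this is a
contraction, and the Banach fixed point of the iterate is a fixed point of the map itself.
-/

open scoped Nat

namespace Skorohod

noncomputable def runningSup (g : ℝ → ℝ) (t : ℝ) : ℝ := sSup (g '' Icc 0 t)

lemma runningSup_le_add {g h : ℝ → ℝ} {t C : ℝ} (hh : BddAbove (h '' Icc 0 t)) (ht : 0 ≤ t)
    (hC : ∀ s ∈ Icc 0 t, g s ≤ h s + C) : runningSup g t ≤ runningSup h t + C :=
  csSup_le ((nonempty_Icc.2 ht).image g) <| forall_mem_image.2 fun s hs =>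
    (hC s hs).trans <| by gcongr; exact le_csSup hh (mem_image_of_mem h hs)

lemma abs_runningSup_sub_le {g h : ℝ → ℝ} {t C : ℝ} (hg : BddAbove (g '' Icc 0 t))
    (hh : BddAbove (h '' Icc 0 t)) (ht : 0 ≤ t) (hC : ∀ s ∈ Icc 0 t, |g s - h s| ≤ C) :
    |runningSup g t - runningSup h t| ≤ C := by
  have hgh : runningSup g t ≤ runningSup h t + C :=
    runningSup_le_add hh ht fun s hs => by linarith [(abs_le.1 (hC s hs)).2]
  have hhg : runningSup h t ≤ runningSup g t + C :=
    runningSup_le_add hg ht fun s hs => by linarith [(abs_le.1 (hC s hs)).1]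
  exact abs_sub_le_iff.2 ⟨by linarith, by linarith⟩

lemma continuousOn_runningSup {g : ℝ → ℝ} {T : ℝ} (hg : ContinuousOn g (Icc 0 T)) :
    ContinuousOn (runningSup g) (Icc 0 T) := by
  rcases lt_or_ge T 0 with hT | hT
  · simp [Icc_eq_empty_of_lt hT]
  set ge := IccExtend hT ((Icc 0 T).domRestrict g)
  have hge : Continuous ge := hg.domRestrict.Icc_extend'
  -- rescaling `[0, t]` to `[0, 1]` makes the running supremum a supremum over a fixed compact set
  have hrescale : ∀ t ∈ Icc 0 T, runningSup g t = sSup ((fun s => ge (t * s)) '' Icc 0 1) := by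
    intro t ht
    rw [runningSup, ← image_image ge (t * ·), image_mul_left_Icc ht.1 zero_le_one, mul_zero,
      mul_one]
    exact congrArg sSup <| image_congr fun s hs =>
      (IccExtend_of_mem hT ((Icc 0 T).domRestrict g) ⟨hs.1, hs.2.trans ht.2⟩).symm
  exact (isCompact_Icc.continuous_sSup (by fun_prop)).continuousOn.congr hrescale

section Volterra

variable {E : Type*} [MetricSpace E] {T L : ℝ}

lemma dist_iterate_apply_le (hT : 0 ≤ T) (hL : 0 ≤ L) {Φ : C(Icc 0 T, E) → C(Icc 0 T, E)}
    (hΦ : ∀ V W (t : Icc 0 T),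
      dist (Φ V t) (Φ W t) ≤ L * ∫ u in (0 : ℝ)..t, dist (IccExtend hT V u) (IccExtend hT W u))
    (n : ℕ) (V W : C(Icc 0 T, E)) (t : Icc 0 T) :
    dist (Φ^[n] V t) (Φ^[n] W t) ≤ (L * t) ^ n / n ! * dist V W := by
  induction n generalizing t with
  | zero => simpa using ContinuousMap.dist_apply_le_dist t
  | succ n ih =>
    have hbound : ∀ u ∈ Icc (0 : ℝ) t, dist (IccExtend hT (Φ^[n] V) u) (IccExtend hT (Φ^[n] W) u)
        ≤ (L * u) ^ n / n ! * dist V W := fun u hu => by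
      have huT : u ∈ Icc 0 T := ⟨hu.1, hu.2.trans t.2.2⟩
      simpa only [IccExtend_of_mem hT _ huT] using ih ⟨u, huT⟩
    calc dist (Φ^[n + 1] V t) (Φ^[n + 1] W t)
        ≤ L * ∫ u in (0 : ℝ)..t, dist (IccExtend hT (Φ^[n] V) u) (IccExtend hT (Φ^[n] W) u) := by
          simpa only [Function.iterate_succ_apply'] using hΦ _ _ t
      _ ≤ L * ∫ u in (0 : ℝ)..t, (L * u) ^ n / n ! * dist V W := by
          gcongr
          refine intervalIntegral.integral_mono_on t.2.1 ?_ ?_ hbound <;>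
            apply Continuous.intervalIntegrable <;> fun_prop
      _ = (L * t) ^ (n + 1) / (n + 1)! * dist V W := by
          simp only [mul_pow, div_eq_mul_inv, intervalIntegral.integral_mul_const,
            intervalIntegral.integral_const_mul, integral_pow, Nat.factorial_succ]
          push_cast
          field_simp
          ring

theorem exists_fixedPoint_of_dist_le_integral [CompleteSpace E] [Nonempty E] (hT : 0 ≤ T)
    (hL : 0 ≤ L) {Φ : C(Icc 0 T, E) → C(Icc 0 T, E)}
    (hΦ : ∀ V W (t : Icc 0 T),
      dist (Φ V t) (Φ W t) ≤ L * ∫ u in (0 : ℝ)..t, dist (IccExtend hT V u) (IccExtend hT W u)) :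
    ∃ V, Φ V = V := by
  obtain ⟨n, hn⟩ : ∃ n : ℕ, (L * T) ^ n / n ! < 1 :=
    ((FloorSemiring.tendsto_pow_div_factorial_atTop (L * T)).eventually
      (gt_mem_nhds one_pos)).exists
  have hLT : 0 ≤ (L * T) ^ n / n ! := by have := mul_nonneg hL hT; positivity
  have hcontr : ContractingWith ⟨(L * T) ^ n / n !, hLT⟩ Φ^[n] := by
    refine ⟨hn, LipschitzWith.of_dist_le_mul fun V W =>
      (ContinuousMap.dist_le (by positivity)).2 fun t => ?_⟩
    refine (dist_iterate_apply_le hT hL hΦ n V W t).trans ?_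
    change _ ≤ (L * T) ^ n / n ! * dist V W
    have := mul_nonneg hL t.2.1
    gcongr
    exact t.2.2
  have : Nonempty C(Icc 0 T, E) := Nonempty.map (ContinuousMap.const _) ‹_›
  exact ⟨_, hcontr.isFixedPt_fixedPoint_iterate⟩

end Volterra

noncomputable def skorohodMap (f : ℝ → ℝ) (K v : ℝ) (V : ℝ → ℝ) (t : ℝ) : ℝ :=
  v + K * max (runningSup (fun s => -(f s + ∫ u in (0 : ℝ)..s, V u)) t) 0

variable {f V W : ℝ → ℝ} {K v T : ℝ}

lemma continuousOn_skorohodMap (hf : ContinuousOn f (Icc 0 T)) (hV : Continuous V) :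
    ContinuousOn (skorohodMap f K v V) (Icc 0 T) := by
  have hprim : Continuous fun s => ∫ u in (0 : ℝ)..s, V u :=
    intervalIntegral.continuous_primitive (fun _ _ => hV.intervalIntegrable _ _) 0
  unfold skorohodMap
  exact continuousOn_const.add <| continuousOn_const.mul <|
    (continuousOn_runningSup (hf.add hprim.continuousOn).neg).sup continuousOn_const

lemma abs_skorohodMap_sub_le {t : ℝ} (ht : 0 ≤ t) (hf : ContinuousOn f (Icc 0 t))
    (hV : Continuous V) (hW : Continuous W) :
    |skorohodMap f K v V t - skorohodMap f K v W t| ≤ |K| * ∫ u in (0 : ℝ)..t, |V u - W u| := by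
  have hbdd : ∀ X : ℝ → ℝ, Continuous X →
      BddAbove ((fun s => -(f s + ∫ u in (0 : ℝ)..s, X u)) '' Icc 0 t) := fun X hX =>
    isCompact_Icc.bddAbove_image <| (hf.add (intervalIntegral.continuous_primitive
      (fun _ _ => hX.intervalIntegrable _ _) 0).continuousOn).neg
  have hclose : ∀ s ∈ Icc 0 t, |-(f s + ∫ u in (0 : ℝ)..s, V u) - -(f s + ∫ u in (0 : ℝ)..s, W u)|
      ≤ ∫ u in (0 : ℝ)..t, |V u - W u| := fun s hs =>
    calc |-(f s + ∫ u in (0 : ℝ)..s, V u) - -(f s + ∫ u in (0 : ℝ)..s, W u)|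
        = |∫ u in (0 : ℝ)..s, (V u - W u)| := by
          rw [intervalIntegral.integral_sub (hV.intervalIntegrable _ _)
            (hW.intervalIntegrable _ _), ← abs_neg]
          ring_nf
      _ ≤ ∫ u in (0 : ℝ)..s, |V u - W u| := intervalIntegral.abs_integral_le_integral_abs hs.1
      _ ≤ ∫ u in (0 : ℝ)..t, |V u - W u| :=
          intervalIntegral.integral_mono_interval le_rfl hs.1 hs.2
            (Filter.Eventually.of_forall fun _ => abs_nonneg _)
            ((hV.sub hW).abs.intervalIntegrable _ _)
  calc |skorohodMap f K v V t - skorohodMap f K v W t|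
      = |K| * |max (runningSup (fun s => -(f s + ∫ u in (0 : ℝ)..s, V u)) t) 0
          - max (runningSup (fun s => -(f s + ∫ u in (0 : ℝ)..s, W u)) t) 0| := by
        rw [skorohodMap, skorohodMap, ← abs_mul]
        ring_nf
    _ ≤ |K| * ∫ u in (0 : ℝ)..t, |V u - W u| := by
        gcongr
        exact (abs_max_sub_max_le_abs _ _ _).trans <|
          abs_runningSup_sub_le (hbdd V hV) (hbdd W hW) ht hclose

end Skorohod

open Skorohod in
theorem white_skorohod_map_existence_general
    (T : ℝ) (hT : 0 < T) (f : ℝ → ℝ) (hf : ContinuousOn f (Icc 0 T))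
    (K : ℝ) (v : ℝ) :
    ∃ V : ℝ → ℝ, ContinuousOn V (Icc 0 T) ∧
      ∀ t ∈ Icc (0 : ℝ) T,
        V t = v + K * max (sSup ((fun s => -(f s + ∫ u in (0:ℝ)..s, V u)) '' Icc 0 t)) 0 := by
  let Φ : C(Icc (0 : ℝ) T, ℝ) → C(Icc (0 : ℝ) T, ℝ) := fun V =>
    ⟨(Icc 0 T).domRestrict (skorohodMap f K v (IccExtend hT.le V)),
      (continuousOn_skorohodMap hf V.continuous.Icc_extend').domRestrict⟩
  obtain ⟨V, hV⟩ := exists_fixedPoint_of_dist_le_integral hT.le (abs_nonneg K) (Φ := Φ)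
    fun V W t => by
      simp only [Real.dist_eq]
      exact abs_skorohodMap_sub_le t.2.1
        (hf.mono (Icc_subset_Icc_right t.2.2)) V.continuous.Icc_extend' W.continuous.Icc_extend'
  refine ⟨IccExtend hT.le V, V.continuous.Icc_extend'.continuousOn, fun t ht => ?_⟩
  calc IccExtend hT.le V t = Φ V ⟨t, ht⟩ := by rw [hV, IccExtend_of_mem]
    _ = _ := rfl

/-- Existence part of White's deterministic Skorohod-map theorem. -/
theorem white_skorohod_map_existence
    (T : ℝ) (hT : 0 < T) (f : ℝ → ℝ) (hf : ContinuousOn f (Icc 0 T))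
    (K : ℝ) (hK : 0 ≤ K) (v : ℝ) :
    ∃ V : ℝ → ℝ, ContinuousOn V (Icc 0 T) ∧
      ∀ t ∈ Icc (0 : ℝ) T,
        V t = v + K * max (sSup ((fun s => -(f s + ∫ u in (0:ℝ)..s, V u)) '' Icc 0 t)) 0 :=
  white_skorohod_map_existence_general T hT f hf K v
end

section
/- Let T > 0, let f : [0,T] → ℝ be continuous, let K ≥ 0 and v ∈ ℝ. If V₁, V₂ : [0,T] → ℝ are continuous functions each satisfying, for every t ∈ [0,T], Vᵢ(t) = v + K · max( sup_{s ∈ [0,t]} ( −( f(s) + ∫_0^s Vᵢ(u) du ) ), 0 ), then V₁ = V₂. -/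
open MeasureTheory Set

/-- Uniqueness part of White's deterministic Skorohod-map theorem. -/
theorem white_skorohod_map_uniqueness
    (T : ℝ) (hT : 0 < T) (f : ℝ → ℝ) (hf : ContinuousOn f (Icc 0 T))
    (K : ℝ) (hK : 0 ≤ K) (v : ℝ)
    (V₁ V₂ : ℝ → ℝ) (hV₁ : ContinuousOn V₁ (Icc 0 T)) (hV₂ : ContinuousOn V₂ (Icc 0 T))
    (h₁ : ∀ t ∈ Icc (0 : ℝ) T,
      V₁ t = v + K * max (sSup ((fun s => -(f s + ∫ u in (0:ℝ)..s, V₁ u)) '' Icc 0 t)) 0)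
    (h₂ : ∀ t ∈ Icc (0 : ℝ) T,
      V₂ t = v + K * max (sSup ((fun s => -(f s + ∫ u in (0:ℝ)..s, V₂ u)) '' Icc 0 t)) 0) :
    EqOn V₁ V₂ (Icc 0 T) := by
  set D : ℝ → ℝ := fun u => |V₁ u - V₂ u| with hDdef
  have hDcont : ContinuousOn D (Icc 0 T) := (hV₁.sub hV₂).abs
  have hDnn : ∀ u, 0 ≤ D u := fun u => abs_nonneg _
  -- interval integrability facts
  have hsub : ∀ a b : ℝ, a ∈ Icc (0:ℝ) T → b ∈ Icc (0:ℝ) T → uIcc a b ⊆ Icc 0 T := by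
    intro a b ha hb
    exact uIcc_subset_Icc ha hb
  have hDint : ∀ a b : ℝ, a ∈ Icc (0:ℝ) T → b ∈ Icc (0:ℝ) T →
      IntervalIntegrable D volume a b := fun a b ha hb =>
    (hDcont.mono (hsub a b ha hb)).intervalIntegrable
  have hV₁int : ∀ a b : ℝ, a ∈ Icc (0:ℝ) T → b ∈ Icc (0:ℝ) T →
      IntervalIntegrable V₁ volume a b := fun a b ha hb =>
    (hV₁.mono (hsub a b ha hb)).intervalIntegrable
  have hV₂int : ∀ a b : ℝ, a ∈ Icc (0:ℝ) T → b ∈ Icc (0:ℝ) T →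
      IntervalIntegrable V₂ volume a b := fun a b ha hb =>
    (hV₂.mono (hsub a b ha hb)).intervalIntegrable
  have h0T : (0:ℝ) ∈ Icc (0:ℝ) T := ⟨le_rfl, hT.le⟩
  set φ : ℝ → ℝ := fun t => ∫ u in (0:ℝ)..t, D u with hφdef
  have hφnn : ∀ t ∈ Icc (0:ℝ) T, 0 ≤ φ t := by
    intro t ht
    exact intervalIntegral.integral_nonneg ht.1 (fun u _ => hDnn u)
  -- Key pointwise estimate: |V₁ t - V₂ t| ≤ K * φ t
  have key : ∀ t ∈ Icc (0:ℝ) T, D t ≤ K * φ t := by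
    intro t ht
    set g₁ : ℝ → ℝ := fun s => -(f s + ∫ u in (0:ℝ)..s, V₁ u) with hg₁def
    set g₂ : ℝ → ℝ := fun s => -(f s + ∫ u in (0:ℝ)..s, V₂ u) with hg₂def
    have hIccsub : Icc (0:ℝ) t ⊆ Icc 0 T := Icc_subset_Icc le_rfl ht.2
    have hP₁ : ContinuousOn (fun s => ∫ u in (0:ℝ)..s, V₁ u) (Icc 0 t) := by
      have h := intervalIntegral.continuousOn_primitive_interval
        (μ := volume) (f := V₁) (a := 0) (b := t)
        (by rw [uIcc_of_le ht.1]; exact (hV₁.mono hIccsub).integrableOn_compact isCompact_Icc)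
      rwa [uIcc_of_le ht.1] at h
    have hP₂ : ContinuousOn (fun s => ∫ u in (0:ℝ)..s, V₂ u) (Icc 0 t) := by
      have h := intervalIntegral.continuousOn_primitive_interval
        (μ := volume) (f := V₂) (a := 0) (b := t)
        (by rw [uIcc_of_le ht.1]; exact (hV₂.mono hIccsub).integrableOn_compact isCompact_Icc)
      rwa [uIcc_of_le ht.1] at h
    have hg₁c : ContinuousOn g₁ (Icc 0 t) := (((hf.mono hIccsub).add hP₁)).neg
    have hg₂c : ContinuousOn g₂ (Icc 0 t) := (((hf.mono hIccsub).add hP₂)).neg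
    have hne : (Icc (0:ℝ) t).Nonempty := ⟨0, le_rfl, ht.1⟩
    have hbdd₁ : BddAbove (g₁ '' Icc 0 t) :=
      (isCompact_Icc.image_of_continuousOn hg₁c).bddAbove
    have hbdd₂ : BddAbove (g₂ '' Icc 0 t) :=
      (isCompact_Icc.image_of_continuousOn hg₂c).bddAbove
    -- pointwise difference bound
    have hdiff : ∀ s ∈ Icc (0:ℝ) t, |g₁ s - g₂ s| ≤ φ t := by
      intro s hs
      have hsT : s ∈ Icc (0:ℝ) T := hIccsub hs
      have heq : g₁ s - g₂ s = ∫ u in (0:ℝ)..s, (V₂ u - V₁ u) := by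
        rw [intervalIntegral.integral_sub (hV₂int 0 s h0T hsT) (hV₁int 0 s h0T hsT)]
        simp [hg₁def, hg₂def]; ring
      rw [heq]
      calc |∫ u in (0:ℝ)..s, (V₂ u - V₁ u)| ≤ ∫ u in (0:ℝ)..s, |V₂ u - V₁ u| :=
            intervalIntegral.abs_integral_le_integral_abs hs.1
        _ = ∫ u in (0:ℝ)..s, D u := by
            congr 1; ext u; rw [abs_sub_comm]
        _ ≤ φ t := by
            refine intervalIntegral.integral_mono_interval le_rfl hs.1 hs.2 ?_
              (hDint 0 t h0T ht)
            filter_upwards with u using hDnn u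
    have hS : |sSup (g₁ '' Icc 0 t) - sSup (g₂ '' Icc 0 t)| ≤ φ t := by
      rw [abs_sub_le_iff]
      constructor
      · rw [sub_le_iff_le_add]
        refine csSup_le (hne.image _) ?_
        rintro x ⟨s, hs, rfl⟩
        have h1 : g₁ s ≤ g₂ s + φ t := by
          have := (abs_sub_le_iff.mp (hdiff s hs)).1
          linarith
        have := le_csSup hbdd₂ (mem_image_of_mem g₂ hs)
        linarith
      · rw [sub_le_iff_le_add]
        refine csSup_le (hne.image _) ?_
        rintro x ⟨s, hs, rfl⟩
        have h1 : g₂ s ≤ g₁ s + φ t := by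
          have := (abs_sub_le_iff.mp (hdiff s hs)).2
          linarith
        have := le_csSup hbdd₁ (mem_image_of_mem g₁ hs)
        linarith
    have hVdiff : V₁ t - V₂ t =
        K * (max (sSup (g₁ '' Icc 0 t)) 0 - max (sSup (g₂ '' Icc 0 t)) 0) := by
      rw [h₁ t ht, h₂ t ht]; ring
    calc D t = K * |max (sSup (g₁ '' Icc 0 t)) 0 - max (sSup (g₂ '' Icc 0 t)) 0| := by
          rw [hDdef]; simp only []
          rw [hVdiff, abs_mul, abs_of_nonneg hK]
      _ ≤ K * |sSup (g₁ '' Icc 0 t) - sSup (g₂ '' Icc 0 t)| :=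
          mul_le_mul_of_nonneg_left (abs_max_sub_max_le_abs _ _ _) hK
      _ ≤ K * φ t := mul_le_mul_of_nonneg_left hS hK
  -- φ is continuous on [0, T]
  have hφcont : ContinuousOn φ (Icc 0 T) := by
    have h := intervalIntegral.continuousOn_primitive_interval
      (μ := volume) (f := D) (a := 0) (b := T)
      (by rw [uIcc_of_le hT.le]; exact hDcont.integrableOn_compact isCompact_Icc)
    rwa [uIcc_of_le hT.le] at h
  -- φ has right derivative D t at every t ∈ [0, T)
  have hφderiv : ∀ t ∈ Ico (0:ℝ) T, HasDerivWithinAt φ (D t) (Ici t) t := by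
    intro t ht
    have htT : t ∈ Icc (0:ℝ) T := ⟨ht.1, ht.2.le⟩
    have hmem : Icc (0:ℝ) T ∈ nhdsWithin t (Ioi t) := by
      refine mem_nhdsWithin.mpr ⟨Iio T, isOpen_Iio, ht.2, ?_⟩
      rintro x ⟨hx1, hx2⟩
      exact ⟨ht.1.trans (le_of_lt hx2), le_of_lt hx1⟩
    have hmeas : StronglyMeasurableAtFilter D (nhdsWithin t (Ioi t)) volume :=
      ⟨Icc 0 T, hmem, hDcont.aestronglyMeasurable measurableSet_Icc⟩
    have hcw : ContinuousWithinAt D (Ioi t) t := by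
      have := (hDcont t htT).mono_of_mem_nhdsWithin hmem
      exact this
    exact intervalIntegral.integral_hasDerivWithinAt_right
      (hDint 0 t h0T htT) hmeas hcw
  -- Grönwall: φ ≡ 0 on [0, T]
  have hφ0 : ∀ t ∈ Icc (0:ℝ) T, φ t = 0 := by
    have hbound : ∀ t ∈ Ico (0:ℝ) T, ‖D t‖ ≤ K * ‖φ t‖ + 0 := by
      intro t ht
      have htT : t ∈ Icc (0:ℝ) T := ⟨ht.1, ht.2.le⟩
      rw [Real.norm_eq_abs, Real.norm_eq_abs, abs_of_nonneg (hDnn t),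
        abs_of_nonneg (hφnn t htT), add_zero]
      exact key t htT
    have hφ0' : ‖φ 0‖ ≤ 0 := by
      simp [hφdef]
    have := norm_le_gronwallBound_of_norm_deriv_right_le hφcont hφderiv hφ0' hbound
    intro t ht
    have h1 := this t ht
    rw [gronwallBound_ε0_δ0] at h1
    have h2 := hφnn t ht
    rw [Real.norm_eq_abs, abs_of_nonneg h2] at h1
    linarith
  -- conclude
  intro t ht
  have h1 := key t ht
  rw [hφ0 t ht, mul_zero] at h1
  have h2 : D t = 0 := le_antisymm h1 (hDnn t)
  have : |V₁ t - V₂ t| = 0 := h2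
  have := abs_eq_zero.mp this
  linarith
end

section
/- Let T > 0 and let f : [0,T] → ℝ be continuous with f(0) ≥ 0. Define m(t) = max( sup_{0 ≤ s ≤ t} ( −f(s) ), 0 ) and x(t) = f(t) + m(t). Then m is continuous and nondecreasing, m(0) = 0, x(t) ≥ 0 for all t ∈ [0,T], and m is constant on every open subinterval of [0,T] on which x > 0. -/
/-!
The regulator is `m = max (runningSup (-f) 0) 0`, where `runningSup g a t = sup g([a, t])`.
On `[a, b]` the running supremum is `t ↦ sup_{s ∈ [a, b]} g (min s t)`, the supremum of a jointly
continuous family over a fixed compact set, hence continuous. It can only increase at times `u`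
where it is attained, `g u = runningSup g a u`; for `m` this means `x u = f u + m u = 0`.
-/

open Set

theorem image_min_Icc_of_mem {α : Type*} [LinearOrder α] {a b t : α} (ht : t ∈ Icc a b) :
    (fun s => min s t) '' Icc a b = Icc a t := by
  ext u
  constructor
  · rintro ⟨s, hs, rfl⟩
    exact ⟨le_min hs.1 ht.1, min_le_right s t⟩
  · intro hu
    exact ⟨u, ⟨hu.1, hu.2.trans ht.2⟩, min_eq_left hu.2⟩

noncomputable def runningSup {α β : Type*} [Preorder α] [SupSet β] (g : α → β) (a t : α) : β :=
  sSup (g '' Icc a t)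

theorem runningSup_self {α β : Type*} [PartialOrder α] [ConditionallyCompleteLattice β] (g : α → β)
    (a : α) : runningSup g a a = g a := by
  simp [runningSup]

section RunningSup

variable {α β : Type*} [ConditionallyCompleteLinearOrder α] [TopologicalSpace α] [OrderTopology α]
  [ConditionallyCompleteLinearOrder β] [TopologicalSpace β] [OrderTopology β]
  {g : α → β} {a b s t : α}

theorem le_runningSup [DenselyOrdered α] (hg : ContinuousOn g (Icc a b)) (hs : s ∈ Icc a t)
    (ht : t ≤ b) : g s ≤ runningSup g a t :=
  (hg.mono (Icc_subset_Icc_right ht)).le_sSup_image_Icc hs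

theorem monotoneOn_runningSup (hg : ContinuousOn g (Icc a b)) :
    MonotoneOn (runningSup g a) (Icc a b) := by
  intro s hs t ht hst
  have hbdd := (isCompact_Icc.image_of_continuousOn (hg.mono (Icc_subset_Icc_right ht.2))).bddAbove
  exact csSup_le_csSup hbdd ((nonempty_Icc.2 hs.1).image g) (image_mono (Icc_subset_Icc_right hst))

theorem continuousOn_runningSup (hg : ContinuousOn g (Icc a b)) :
    ContinuousOn (runningSup g a) (Icc a b) := by
  rcases lt_or_ge b a with hba | hab
  · simp [Icc_eq_empty_of_lt hba]
  set G := IccExtend hab ((Icc a b).domRestrict g)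
  have hG : Continuous G := continuous_IccExtend_iff.2 hg.domRestrict
  have hGg : EqOn G g (Icc a b) := fun s hs => IccExtend_of_mem hab _ hs
  refine (isCompact_Icc.continuous_sSup (K := Icc a b) (f := fun t s => G (min s t))
    (by fun_prop)).continuousOn.congr fun t ht => ?_
  rw [runningSup, ← (hGg.mono (Icc_subset_Icc_right ht.2)).image_eq, ← image_min_Icc_of_mem ht,
    image_image]

theorem exists_eq_runningSup (hg : ContinuousOn g (Icc a b)) (ht : t ∈ Icc a b) :
    ∃ u ∈ Icc a t, g u = runningSup g a t := by
  obtain ⟨u, hu, h⟩ := isCompact_Icc.exists_sSup_image_eq (nonempty_Icc.2 ht.1)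
    (hg.mono (Icc_subset_Icc_right ht.2))
  exact ⟨u, hu, h.symm⟩

variable [DenselyOrdered α]

theorem exists_mem_Ioc_eq_runningSup_of_lt (hg : ContinuousOn g (Icc a b)) (hs : a ≤ s)
    (hst : s ≤ t) (ht : t ≤ b) (h : runningSup g a s < runningSup g a t) :
    ∃ u ∈ Ioc s t, g u = runningSup g a u ∧ g u = runningSup g a t := by
  obtain ⟨u, hu, hgu⟩ := exists_eq_runningSup hg ⟨hs.trans hst, ht⟩
  have hsu : s < u := by
    by_contra! hus
    exact (hgu ▸ le_runningSup hg ⟨hu.1, hus⟩ (hst.trans ht)).not_gt h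
  refine ⟨u, ⟨hsu, hu.2⟩, le_antisymm (le_runningSup hg ⟨hu.1, le_rfl⟩ (hu.2.trans ht)) ?_, hgu⟩
  exact hgu ▸ monotoneOn_runningSup hg ⟨hu.1, hu.2.trans ht⟩ ⟨hs.trans hst, ht⟩ hu.2

theorem exists_mem_Ioc_max_runningSup_eq_of_lt (hg : ContinuousOn g (Icc a b)) (c : β)
    (hs : a ≤ s) (hst : s ≤ t) (ht : t ≤ b)
    (h : max (runningSup g a s) c < max (runningSup g a t) c) :
    ∃ u ∈ Ioc s t, max (runningSup g a u) c = g u := by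
  have hlt : runningSup g a s < runningSup g a t := by
    by_contra! hle
    exact h.not_ge (max_le_max_right c hle)
  have hc : c < runningSup g a t := by
    by_contra! hle
    exact h.not_ge ((max_eq_right hle).trans_le (le_max_right _ _))
  obtain ⟨u, hu, hgu, hgt⟩ := exists_mem_Ioc_eq_runningSup_of_lt hg hs hst ht hlt
  exact ⟨u, hu, hgu ▸ max_eq_left (hgt ▸ hc.le)⟩

end RunningSup

theorem skorohod_lemma_existence_general
    (T : ℝ) (f : ℝ → ℝ) (hf : ContinuousOn f (Icc 0 T)) (hf0 : 0 ≤ f 0)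
    (m x : ℝ → ℝ)
    (hm : ∀ t, m t = max (sSup ((fun s => -(f s)) '' Icc 0 t)) 0)
    (hx : ∀ t, x t = f t + m t) :
    ContinuousOn m (Icc 0 T) ∧ MonotoneOn m (Icc 0 T) ∧ m 0 = 0 ∧
    (∀ t ∈ Icc (0 : ℝ) T, 0 ≤ x t) ∧
    (∀ a b : ℝ, 0 ≤ a → b ≤ T → a < b → (∀ s ∈ Ioo a b, 0 < x s) →
      ∀ s ∈ Ioo a b, ∀ t ∈ Ioo a b, m s = m t) := by
  have hg : ContinuousOn (fun s => -f s) (Icc 0 T) := hf.neg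
  replace hm : m = fun t => max (runningSup (fun s => -f s) 0 t) 0 := funext hm
  subst hm
  replace hx : x = fun t => f t + max (runningSup (fun s => -f s) 0 t) 0 := funext hx
  subst hx
  have hmono := (monotoneOn_runningSup hg).max (monotoneOn_const (c := (0 : ℝ)))
  refine ⟨(continuousOn_runningSup hg).sup continuousOn_const, hmono,
    by simpa [runningSup_self] using hf0, fun t ht => ?_, ?_⟩
  · have := le_runningSup hg ⟨ht.1, le_rfl⟩ ht.2
    linarith [le_max_left (runningSup (fun s => -f s) 0 t) 0]
  intro a b ha hb _ hpos s hs t ht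
  wlog hst : s ≤ t generalizing s t
  · exact (this t ht s hs (le_of_not_ge hst)).symm
  refine (hmono ⟨ha.trans hs.1.le, hs.2.le.trans hb⟩ ⟨ha.trans ht.1.le, ht.2.le.trans hb⟩
    hst).antisymm (not_lt.1 fun hlt => ?_)
  obtain ⟨u, hu, hmu⟩ := exists_mem_Ioc_max_runningSup_eq_of_lt hg 0 (ha.trans hs.1.le) hst
    (ht.2.le.trans hb) hlt
  have hxu := hpos u ⟨hs.1.trans_le hu.1.le, hu.2.trans_lt ht.2⟩
  simp only [hmu] at hxu
  linarith

/-- Existence half of the Skorohod lemma: for continuous `f` with `f 0 ≥ 0`, the function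
`m(t) = max (sup_{0 ≤ s ≤ t} (-f s)) 0` is a continuous nondecreasing regulator keeping
`x = f + m` nonnegative, and `m` is flat off the set `{s : x s = 0}`. -/
theorem skorohod_lemma_existence
    (T : ℝ) (hT : 0 < T) (f : ℝ → ℝ) (hf : ContinuousOn f (Icc 0 T)) (hf0 : 0 ≤ f 0)
    (m x : ℝ → ℝ)
    (hm : ∀ t, m t = max (sSup ((fun s => -(f s)) '' Icc 0 t)) 0)
    (hx : ∀ t, x t = f t + m t) :
    ContinuousOn m (Icc 0 T) ∧ MonotoneOn m (Icc 0 T) ∧ m 0 = 0 ∧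
    (∀ t ∈ Icc (0 : ℝ) T, 0 ≤ x t) ∧
    (∀ a b : ℝ, 0 ≤ a → b ≤ T → a < b → (∀ s ∈ Ioo a b, 0 < x s) →
      ∀ s ∈ Ioo a b, ∀ t ∈ Ioo a b, m s = m t) :=
  skorohod_lemma_existence_general T f hf hf0 m x hm hx
end

section
/- Let T > 0 and let f : [0,T] → ℝ be continuous with f(0) ≥ 0. Suppose m̃ : [0,T] → ℝ is continuous and nondecreasing with m̃(0) = 0, f(t) + m̃(t) ≥ 0 for all t ∈ [0,T], and m̃ is constant on every open subinterval of [0,T] on which f + m̃ > 0. Then m̃(t) = max( sup_{0 ≤ s ≤ t} ( −f(s) ), 0 ) for every t ∈ [0,T]. -/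
open MeasureTheory Set Filter Topology

/-- Uniqueness half of the Skorohod lemma: any continuous nondecreasing function `m̃`
starting at `0` that keeps `f + m̃` nonnegative and is flat off the zero set of `f + m̃`
equals the explicit running minimum `max (sup_{0 ≤ s ≤ t} (-f s)) 0`. -/
theorem skorohod_lemma_uniqueness
    (T : ℝ) (hT : 0 < T) (f : ℝ → ℝ) (hf : ContinuousOn f (Icc 0 T)) (hf0 : 0 ≤ f 0)
    (m' : ℝ → ℝ) (hm'cont : ContinuousOn m' (Icc 0 T)) (hm'mono : MonotoneOn m' (Icc 0 T))
    (hm'0 : m' 0 = 0)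
    (hnonneg : ∀ t ∈ Icc (0 : ℝ) T, 0 ≤ f t + m' t)
    (hflat : ∀ a b : ℝ, 0 ≤ a → b ≤ T → a < b → (∀ s ∈ Ioo a b, 0 < f s + m' s) →
      ∀ s ∈ Ioo a b, ∀ t ∈ Ioo a b, m' s = m' t) :
    ∀ t ∈ Icc (0 : ℝ) T, m' t = max (sSup ((fun s => -(f s)) '' Icc 0 t)) 0 := by
  intro t ht
  obtain ⟨ht0, htT⟩ := ht
  have hsub : Icc (0:ℝ) t ⊆ Icc 0 T := Icc_subset_Icc le_rfl htT
  have hm't0 : (0:ℝ) ≤ m' t := by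
    rw [← hm'0]; exact hm'mono (left_mem_Icc.2 hT.le) ⟨ht0, htT⟩ ht0
  have hub : ∀ x ∈ (fun s => -(f s)) '' Icc 0 t, x ≤ m' t := by
    rintro x ⟨s, hs, rfl⟩
    have h1 := hnonneg s (hsub hs)
    have h2 := hm'mono (hsub hs) ⟨ht0, htT⟩ hs.2
    simp only
    linarith
  have hbdd : BddAbove ((fun s => -(f s)) '' Icc 0 t) := ⟨m' t, hub⟩
  set M := max (sSup ((fun s => -(f s)) '' Icc 0 t)) 0 with hMdef
  have hMle : M ≤ m' t := max_le (Real.sSup_le hub hm't0) hm't0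
  have hMge : ∀ u ∈ Icc (0:ℝ) t, -(f u) ≤ M := fun u hu =>
    le_max_of_le_left (le_csSup hbdd ⟨u, hu, rfl⟩)
  refine le_antisymm ?_ hMle
  by_contra hlt
  push_neg at hlt
  -- hlt : M < m' t
  set S := Icc (0:ℝ) t ∩ m' ⁻¹' {m' t} with hSdef
  have hSclosed : IsClosed S :=
    (hm'cont.mono hsub).preimage_isClosed_of_isClosed isClosed_Icc isClosed_singleton
  have htS : t ∈ S := ⟨⟨ht0, le_rfl⟩, rfl⟩
  have hSbdd : BddBelow S := ⟨0, fun x hx => hx.1.1⟩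
  set a := sInf S with hadef
  have haS : a ∈ S := hSclosed.csInf_mem ⟨t, htS⟩ hSbdd
  have ha0 : 0 ≤ a := haS.1.1
  have hat : a ≤ t := haS.1.2
  have hma : m' a = m' t := haS.2
  have haT : a ≤ T := hat.trans htT
  have hapos : 0 < a := by
    rcases ha0.lt_or_eq with h | h
    · exact h
    · exfalso
      rw [← h] at hma
      rw [hm'0] at hma
      have : (0:ℝ) ≤ M := le_max_right _ _
      linarith
  -- key: m' ≤ M on Ioo 0 a
  have key : ∀ s ∈ Ioo (0:ℝ) a, m' s ≤ M := by
    intro s hs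
    have hsIcc : s ∈ Icc (0:ℝ) T := ⟨hs.1.le, (hs.2.le.trans hat).trans htT⟩
    have hu : ∃ u ∈ Ioo s a, f u + m' u ≤ 0 := by
      by_contra h
      push_neg at h
      have hconst := hflat s a hs.1.le haT hs.2 (fun u hu => h u hu)
      set c := m' ((s + a) / 2) with hcdef
      have hmid : (s + a) / 2 ∈ Ioo s a := ⟨by linarith [hs.2], by linarith [hs.2]⟩
      have hIooSub : Ioo s a ⊆ Icc (0:ℝ) T :=
        fun u hu => ⟨hs.1.le.trans hu.1.le, (hu.2.le.trans hat).trans htT⟩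
      have hev : m' =ᶠ[𝓝[Ioo s a] a] fun _ => c :=
        eventually_nhdsWithin_of_forall (fun x hx => hconst x hx _ hmid)
      have hev' : m' =ᶠ[𝓝[Ioo s a] s] fun _ => c :=
        eventually_nhdsWithin_of_forall (fun x hx => hconst x hx _ hmid)
      haveI : (𝓝[Ioo s a] a).NeBot := right_nhdsWithin_Ioo_neBot hs.2
      haveI : (𝓝[Ioo s a] s).NeBot := left_nhdsWithin_Ioo_neBot hs.2
      have htenda : Tendsto m' (𝓝[Ioo s a] a) (𝓝 (m' a)) :=
        (hm'cont a ⟨ha0, haT⟩).mono hIooSub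
      have htends : Tendsto m' (𝓝[Ioo s a] s) (𝓝 (m' s)) :=
        (hm'cont s hsIcc).mono hIooSub
      have hma' : m' a = c := tendsto_nhds_unique htenda (Tendsto.congr' hev.symm tendsto_const_nhds)
      have hms' : m' s = c := tendsto_nhds_unique htends (Tendsto.congr' hev'.symm tendsto_const_nhds)
      have hsS : s ∈ S := ⟨⟨hs.1.le, hs.2.le.trans hat⟩, by
        simp only [mem_preimage, mem_singleton_iff]
        rw [hms', ← hma', hma]⟩
      exact absurd (csInf_le hSbdd hsS) (not_le.2 hs.2)
    obtain ⟨u, huIoo, hule⟩ := hu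
    have huIcc : u ∈ Icc (0:ℝ) t := ⟨hs.1.le.trans huIoo.1.le, huIoo.2.le.trans hat⟩
    have h1 : m' u ≤ -(f u) := by linarith
    have h2 : m' s ≤ m' u := hm'mono hsIcc (hsub huIcc) huIoo.1.le
    exact h2.trans (h1.trans (hMge u huIcc))
  -- conclude m' a ≤ M by continuity
  haveI : (𝓝[Ioo 0 a] a).NeBot := right_nhdsWithin_Ioo_neBot hapos
  have htenda : Tendsto m' (𝓝[Ioo 0 a] a) (𝓝 (m' a)) :=
    (hm'cont a ⟨ha0, haT⟩).mono (fun u hu => ⟨hu.1.le, (hu.2.le.trans hat).trans htT⟩)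
  have hle : m' a ≤ M :=
    le_of_tendsto htenda (eventually_nhdsWithin_of_forall (fun x hx => key x hx))
  rw [hma] at hle
  linarith
end
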